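/- Let R be a ring satisfying Hypothesis H over a field F of characteristic 0, and let D be the F-subalgebra of End_F(R) generated by the multiplication operators by elements of R together with the F-linear derivations of R. Let M be a left D-module that has finite length as a D-module. Then, regarding M as an R-module via the inclusion of the multiplication operators R → D, the set of associated primes Ass_R(M) is finite. -/

import Mathlib

/-- A Noetherian local ring is *regular* if its Krull dimension equals the dimension of its
cotangent space (the minimal number of generators of the maximal ideal). -/
def IsRegularLocal (A : Type*) [CommRing A] [IsLocalRing A] : Prop :=
  IsNoetherianRing A ∧
    ringKrullDim A =
      Module.finrank (IsLocalRing.ResidueField A) (IsLocalRing.CotangentSpace A)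

/-- A commutative ring is *regular* if all of its localizations at primes are regular local. -/
def IsRegularRing' (R : Type*) [CommRing R] : Prop :=
  ∀ (P : Ideal R) (_ : P.IsPrime), IsRegularLocal (Localization.AtPrime P)

/-- Hypothesis H: `R` is a commutative Noetherian regular ring containing a field `F` of
characteristic `0` such that (1) `R` is equidimensional of dimension `n`, (2) every residue
field at a maximal ideal is algebraic over `F`, and (3) `Der_F(R)` is a finitely generated
projective `R`-module of rank `n` whose localization at every maximal ideal `m` is the module
of `F`-linear derivations of `R_m` (via the canonical map). -/
structure HypothesisH (F : Type*) (R : Type*) [Field F] [CommRing R] [Algebra F R]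
    (n : ℕ) : Prop where
  charZero : CharZero F
  noetherian : IsNoetherianRing R
  regular : IsRegularRing' R
  equidim : ∀ (m : Ideal R) (_ : m.IsMaximal), ringKrullDim (Localization.AtPrime m) = n
  residue_algebraic : ∀ (m : Ideal R) (_ : m.IsMaximal), Algebra.IsAlgebraic F (R ⧸ m)
  der_finite : Module.Finite R (Derivation F R R)
  der_projective : Module.Projective R (Derivation F R R)
  der_free_rank : ∀ (m : Ideal R) (_ : m.IsMaximal),
    Module.Free (Localization.AtPrime m) (LocalizedModule m.primeCompl (Derivation F R R)) ∧
      Module.finrank (Localization.AtPrime m)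
        (LocalizedModule m.primeCompl (Derivation F R R)) = n
  der_localize : ∀ (m : Ideal R) (_ : m.IsMaximal),
    ∃ g : Derivation F R R →ₗ[R]
        Derivation F (Localization.AtPrime m) (Localization.AtPrime m),
      (∀ (δ : Derivation F R R) (r : R),
          g δ (algebraMap R (Localization.AtPrime m) r)
            = algebraMap R (Localization.AtPrime m) (δ r)) ∧
        IsLocalizedModule m.primeCompl g


/-- The ring `D` of `F`-linear differential operators of `R`: the `F`-subalgebra of
`End_F(R)` generated by the multiplication operators by elements of `R` together with the
`F`-linear derivations of `R`. -/
def diffAlgebra (F R : Type*) [Field F] [CommRing R] [Algebra F R] :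
    Subalgebra F (Module.End F R) :=
  Algebra.adjoin F
    ((Set.range fun r : R => (LinearMap.mulLeft F r : Module.End F R)) ∪
      (Set.range fun δ : Derivation F R R => (δ : R →ₗ[F] R)))

/-!
Call `d ∈ D` of order at most `k` if `I ^ (m + k) * d ⊆ D * I ^ m` for all ideals `I ⊆ R` and all
`m`. Multiplication operators have order `0`, derivations order `1` (a derivation maps
`I ^ (m + 1)` into `I ^ m`), and orders add under products, so every element of `D` has finite
order. Hence if `I = ann_R x` then `I ^ (k + 1)` kills `d • x`, giving `√(ann x) ≤ √(ann (d • x))`.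
In a simple `D`-module every element is `d • x` for any `x ≠ 0`, so all associated primes
coincide; along a composition series `Ass M ⊆ Ass N ∪ Ass (M / N)` then gives finiteness.
-/

theorem Derivation.mem_pow_of_mem_pow_succ {S A : Type*} [CommSemiring S] [CommSemiring A]
    [Algebra S A] (δ : Derivation S A A) (I : Ideal A) {m : ℕ} {a : A} (ha : a ∈ I ^ (m + 1)) :
    δ a ∈ I ^ m := by
  induction m generalizing a with
  | zero => simp [Ideal.one_eq_top]
  | succ m ih =>
    rw [pow_succ] at ha
    refine Submodule.mul_induction_on ha (fun b hb c hc => ?_) (fun x y hx hy => ?_)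
    · rw [Derivation.leibniz, smul_eq_mul, smul_eq_mul]
      refine add_mem (Ideal.mul_mem_right _ _ hb) ?_
      rw [pow_succ']
      exact Ideal.mul_mem_mul hc (ih hb)
    · rw [map_add]
      exact add_mem hx hy

section OrderLE

variable {R D : Type*} [CommSemiring R] [Semiring D] (φ : R →+* D)

def OrderLE (k : ℕ) (d : D) : Prop :=
  ∀ (I : Ideal R) (m : ℕ), ∀ a ∈ I ^ (m + k), φ a * d ∈ (I ^ m).map φ

variable {φ}

theorem OrderLE.mono {k l : ℕ} {d : D} (hd : OrderLE φ k d) (hkl : k ≤ l) : OrderLE φ l d :=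
  fun I m a ha => hd I m a (Ideal.pow_le_pow_right (by omega) ha)

theorem orderLE_zero_apply (r : R) : OrderLE φ 0 (φ r) := fun I m a ha => by
  rw [← map_mul]
  exact Ideal.mem_map_of_mem φ (Ideal.mul_mem_right r _ ha)

theorem OrderLE.add {k : ℕ} {d e : D} (hd : OrderLE φ k d) (he : OrderLE φ k e) :
    OrderLE φ k (d + e) := fun I m a ha => by
  rw [mul_add]
  exact add_mem (hd I m a ha) (he I m a ha)

theorem OrderLE.mul_mem_map_pow {l : ℕ} {e : D} (he : OrderLE φ l e) {I : Ideal R} {m : ℕ}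
    {u : D} (hu : u ∈ (I ^ (m + l)).map φ) : u * e ∈ (I ^ m).map φ := by
  induction hu using Submodule.span_induction with
  | mem u hu =>
    obtain ⟨b, hb, rfl⟩ := hu
    exact he I m b hb
  | zero => simp
  | add u v _ _ hu hv => simpa only [add_mul] using add_mem hu hv
  | smul c u _ hu => simpa only [smul_eq_mul, mul_assoc] using Ideal.mul_mem_left _ c hu

theorem OrderLE.mul {k l : ℕ} {d e : D} (hd : OrderLE φ k d) (he : OrderLE φ l e) :
    OrderLE φ (k + l) (d * e) := fun I m a ha => by
  rw [← mul_assoc]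
  exact he.mul_mem_map_pow (hd I (m + l) a (by rwa [add_right_comm, add_assoc]))

end OrderLE

theorem orderLE_one_of_lie_eq {S R D : Type*} [CommSemiring S] [CommRing R] [Algebra S R]
    [Ring D] {φ : R →+* D} {d : D} (δ : Derivation S R R) (hd : ∀ a, ⁅d, φ a⁆ = φ (δ a)) :
    OrderLE φ 1 d := fun I m a ha => by
  rw [← sub_sub_cancel (d * φ a) (φ a * d), ← Ring.lie_def, hd]
  have ha' : a ∈ I ^ m := Ideal.pow_le_pow_right m.le_succ ha
  exact sub_mem (Ideal.mul_mem_left _ _ (Ideal.mem_map_of_mem φ ha'))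
    (Ideal.mem_map_of_mem φ (δ.mem_pow_of_mem_pow_succ I ha))

namespace diffAlgebra

variable {F R : Type*} [Field F] [CommRing R] [Algebra F R]

variable (F R) in
def mulLeft : R →ₐ[F] diffAlgebra F R :=
  (Algebra.lmul F R).codRestrict _ fun r => Algebra.subset_adjoin (Or.inl ⟨r, rfl⟩)

def ofDerivation (δ : Derivation F R R) : diffAlgebra F R :=
  ⟨δ, Algebra.subset_adjoin (Or.inr ⟨δ, rfl⟩)⟩

theorem lie_ofDerivation_mulLeft (δ : Derivation F R R) (a : R) :
    ⁅ofDerivation δ, mulLeft F R a⁆ = mulLeft F R (δ a) := by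
  rw [Ring.lie_def]
  ext t
  change δ (a * t) - a * δ t = δ a * t
  rw [Derivation.leibniz, smul_eq_mul, smul_eq_mul]
  ring

-- `(D := diffAlgebra F R)` below spares the elaborator a very slow unification of ring structures.
theorem exists_orderLE (d : diffAlgebra F R) :
    ∃ k, OrderLE (mulLeft F R).toRingHom k d := by
  obtain ⟨d, hd⟩ := d
  induction hd using Algebra.adjoin_induction with
  | mem x hx =>
    rcases hx with ⟨r, rfl⟩ | ⟨δ, rfl⟩
    · exact ⟨0, orderLE_zero_apply r⟩
    · exact ⟨1, orderLE_one_of_lie_eq (D := diffAlgebra F R) δ (lie_ofDerivation_mulLeft δ)⟩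
  | algebraMap c =>
    refine ⟨0, ?_⟩
    convert orderLE_zero_apply (D := diffAlgebra F R) (algebraMap F R c)
    exact ((mulLeft F R).commutes c).symm
  | add x y hx hy ihx ihy =>
    obtain ⟨k, hk⟩ := ihx
    obtain ⟨l, hl⟩ := ihy
    exact ⟨max k l, (hk.mono (le_max_left k l)).add (hl.mono (le_max_right k l))⟩
  | mul x y hx hy ihx ihy =>
    obtain ⟨k, hk⟩ := ihx
    obtain ⟨l, hl⟩ := ihy
    exact ⟨k + l, hk.mul hl⟩

end diffAlgebra

section Semiring

variable {R D : Type*} [CommSemiring R] [Semiring D] {φ : R →+* D}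
  {X : Type*} [AddCommMonoid X] [Module D X] [Module R X]

theorem OrderLE.colon_pow_le_colon_smul {k : ℕ} {d : D} (hd : OrderLE φ k d)
    (hX : ∀ (r : R) (x : X), φ r • x = r • x) (x : X) :
    ((⊥ : Submodule R X).colon {x}) ^ (1 + k) ≤ (⊥ : Submodule R X).colon {d • x} := by
  set I := (⊥ : Submodule R X).colon {x}
  have hI : I.map φ ≤ LinearMap.ker (LinearMap.toSpanSingleton D X x) :=
    Ideal.map_le_iff_le_comap.mpr fun b hb => by
      simpa [hX, I, Submodule.mem_colon_singleton] using hb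
  intro a ha
  have hmem : φ a * d ∈ I.map φ := by simpa using hd I 1 a ha
  have had : (φ a * d) • x = 0 := hI hmem
  rw [Submodule.mem_colon_singleton, Submodule.mem_bot, ← hX, ← mul_smul, had]

theorem OrderLE.radical_colon_le {k : ℕ} {d : D} (hd : OrderLE φ k d)
    (hX : ∀ (r : R) (x : X), φ r • x = r • x) (x : X) :
    ((⊥ : Submodule R X).colon {x}).radical ≤ ((⊥ : Submodule R X).colon {d • x}).radical := by
  rw [← Ideal.radical_pow _ (by omega : 1 + k ≠ 0)]
  exact Ideal.radical_mono (hd.colon_pow_le_colon_smul hX x)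

theorem compatibleSMul_of_smul_eq {Y : Type*} [AddCommMonoid Y] [Module D Y] [Module R Y]
    (hX : ∀ (r : R) (x : X), φ r • x = r • x) (hY : ∀ (r : R) (y : Y), φ r • y = r • y) :
    LinearMap.CompatibleSMul X Y R D :=
  ⟨fun f r x => by rw [← hX, ← hY, map_smul]⟩

end Semiring

section Ring

variable {R D : Type*} [CommRing R] [Ring D] {φ : R →+* D}
  {X : Type*} [AddCommGroup X] [Module D X] [Module R X]

theorem associatedPrimes_subsingleton_of_isSimpleModule [IsSimpleModule D X]
    (hφ : ∀ d : D, ∃ k, OrderLE φ k d) (hX : ∀ (r : R) (x : X), φ r • x = r • x) :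
    (associatedPrimes R X).Subsingleton := by
  suffices h : ∀ P ∈ associatedPrimes R X, ∀ Q ∈ associatedPrimes R X, P ≤ Q from
    fun P hP Q hQ => le_antisymm (h P hP Q hQ) (h Q hQ P hP)
  rintro P ⟨hP, x, rfl⟩ Q ⟨-, y, rfl⟩
  have hx : x ≠ 0 := by
    rintro rfl
    exact hP.ne_top (by simp)
  obtain ⟨d, rfl⟩ := IsSimpleModule.toSpanSingleton_surjective D hx y
  obtain ⟨k, hk⟩ := hφ d
  exact hk.radical_colon_le hX x

theorem associatedPrimes_finite_of_isFiniteLength (hφ : ∀ d : D, ∃ k, OrderLE φ k d)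
    (hlen : IsFiniteLength D X) (hX : ∀ (r : R) (x : X), φ r • x = r • x) :
    (associatedPrimes R X).Finite := by
  revert hX
  revert ‹Module R X›
  induction hlen with
  | of_subsingleton => simp [associatedPrimes.eq_empty_of_subsingleton]
  | @of_simple_quotient X _ _ N _ _ ih =>
    intro _ hX
    let _ : Module R N := Module.compHom N φ
    let _ : Module R (X ⧸ N) := Module.compHom (X ⧸ N) φ
    have := compatibleSMul_of_smul_eq (X := N) (fun _ _ => rfl) hX
    have := compatibleSMul_of_smul_eq hX (Y := X ⧸ N) (fun _ _ => rfl)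
    have hexact := associatedPrimes.subset_union_of_exact (f := N.subtype.restrictScalars R)
      (g := N.mkQ.restrictScalars R) N.injective_subtype (LinearMap.exact_subtype_mkQ N)
    exact ((ih fun _ _ => rfl).union
      (associatedPrimes_subsingleton_of_isSimpleModule hφ fun _ _ => rfl).finite).subset hexact

end Ring

theorem finite_assPrimes_of_isFiniteLength_over_diffAlgebra_general
    {F R : Type*} [Field F] [CommRing R] [Algebra F R]
    (M : Type*) [AddCommGroup M] [Module R M] [Module ↥(diffAlgebra F R) M]
    (hcompat : ∀ (r : R) (hr : (LinearMap.mulLeft F r : Module.End F R) ∈ diffAlgebra F R)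
      (m : M), (⟨LinearMap.mulLeft F r, hr⟩ : ↥(diffAlgebra F R)) • m = r • m)
    (hlen : IsFiniteLength ↥(diffAlgebra F R) M) :
    (associatedPrimes R M).Finite :=
  associatedPrimes_finite_of_isFiniteLength (D := diffAlgebra F R) diffAlgebra.exists_orderLE hlen
    fun r m => hcompat r _ m

/-- Let `R` satisfy Hypothesis H over a field `F` of characteristic `0`, and let `D` be the
ring of `F`-linear differential operators of `R`.  If `M` is a left `D`-module of finite
length whose underlying `R`-module structure is induced by the inclusion `R → D` as
multiplication operators, then the set of associated primes of `M` over `R` is finite. -/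
theorem finite_assPrimes_of_isFiniteLength_over_diffAlgebra
    {F R : Type*} [Field F] [CommRing R] [Algebra F R] {n : ℕ}
    (hH : HypothesisH F R n)
    (M : Type*) [AddCommGroup M] [Module R M] [Module ↥(diffAlgebra F R) M]
    (hcompat : ∀ (r : R) (hr : (LinearMap.mulLeft F r : Module.End F R) ∈ diffAlgebra F R)
      (m : M), (⟨LinearMap.mulLeft F r, hr⟩ : ↥(diffAlgebra F R)) • m = r • m)
    (hlen : IsFiniteLength ↥(diffAlgebra F R) M) :
    (associatedPrimes R M).Finite :=
  finite_assPrimes_of_isFiniteLength_over_diffAlgebra_general M hcompat hlen
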